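/- Define T on bounded functions f: Γ → [-1,1] (Γ an ordinal) by: Tf(0) = 1, Tf(1) = -1, Tf(α+2) = f(α), Tf(β) = inf_{α<β} sup_{α<γ<β} f(γ) for β a limit ordinal, and Tf(β+1) = sup_{α<β} inf_{α<γ<β} f(γ) for β a limit ordinal. Then T is nonexpansive for the supremum metric: sup_α |Tf(α) - Tf'(α)| ≤ sup_α |f(α) - f'(α)|. -/

import Mathlib

open scoped Classical

/-- The transfinite shift: `Tf(0) = 1`, `Tf(1) = -1`, `Tf(α+2) = f(α)`,
`Tf(β) = inf_{α<β} sup_{α<γ<β} f(γ)` for `β` limit, and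
`Tf(β+1) = sup_{α<β} inf_{α<γ<β} f(γ)` for `β` limit. -/
noncomputable def Tshift (f : Ordinal → ℝ) (o : Ordinal) : ℝ :=
  if o = 0 then 1
  else if o = 1 then -1
  else if h : ∃ α, o = α + 2 then f h.choose
  else if Order.IsSuccLimit o then ⨅ α : Set.Iio o, ⨆ γ : Set.Ioo (α : Ordinal) o, f γ
  else ⨆ α : Set.Iio (Ordinal.pred o), ⨅ γ : Set.Ioo (α : Ordinal) (Ordinal.pred o), f γ

lemma Tshift_key (f f' : Ordinal → ℝ)
    (hf : ∀ α, f α ∈ Set.Icc (-1:ℝ) 1) (hf' : ∀ α, f' α ∈ Set.Icc (-1:ℝ) 1)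
    (D : ℝ) (hD : 0 ≤ D) (o : Ordinal) (h : ∀ γ, γ < o → f γ ≤ f' γ + D) :
    Tshift f o ≤ Tshift f' o + D := by
  unfold Tshift
  split_ifs with h0 h1 h2 hlim
  · linarith
  · linarith
  · -- o = α + 2 case
    have hc : o = h2.choose + 2 := h2.choose_spec
    have hlt : h2.choose < h2.choose + 2 := lt_add_of_pos_right _ (by norm_num)
    rw [← hc] at hlt
    exact h _ hlt
  · -- limit case
    have hne : Nonempty (Set.Iio o) := ⟨⟨0, hlim.pos⟩⟩
    have hioo : ∀ α : Set.Iio o, Nonempty (Set.Ioo (α : Ordinal) o) := by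
      intro α
      refine ⟨⟨(α : Ordinal) + 1, ?_, ?_⟩⟩
      · exact lt_add_of_pos_right _ (by norm_num)
      · rw [Ordinal.add_one_eq_succ]; exact hlim.succ_lt α.2
    have hbddA : BddBelow (Set.range fun α : Set.Iio o =>
        ⨆ γ : Set.Ioo (α : Ordinal) o, f γ) := by
      refine ⟨-1, ?_⟩
      rintro x ⟨α, rfl⟩
      obtain ⟨γ⟩ := hioo α
      refine le_trans (hf γ).1
        (le_ciSup (f := fun γ : Set.Ioo (α : Ordinal) o => f γ) ⟨1, ?_⟩ γ)
      rintro y ⟨δ, rfl⟩; exact (hf δ).2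
    rw [← sub_le_iff_le_add]
    refine le_ciInf fun α => ?_
    have hA : (⨅ α : Set.Iio o, ⨆ γ : Set.Ioo (α : Ordinal) o, f γ) ≤
        ⨆ γ : Set.Ioo (α : Ordinal) o, f γ := ciInf_le hbddA α
    have hB : (⨆ γ : Set.Ioo (α : Ordinal) o, f γ) ≤
        (⨆ γ : Set.Ioo (α : Ordinal) o, f' γ) + D := by
      haveI := hioo α
      refine ciSup_le fun γ => ?_
      have hs : f' γ ≤ ⨆ γ : Set.Ioo (α : Ordinal) o, f' γ := by
        refine le_ciSup (f := fun γ : Set.Ioo (α : Ordinal) o => f' γ) ⟨1, ?_⟩ γ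
        rintro y ⟨δ, rfl⟩; exact (hf' δ).2
      have hγ := h γ γ.2.2
      linarith
    linarith
  · -- successor of limit case
    obtain (rfl | ⟨β, rfl⟩ | hl) := Ordinal.zero_or_succ_or_isSuccLimit o
    · exact absurd rfl h0
    · rw [Ordinal.pred_succ]
      have hβlim : Order.IsSuccLimit β := by
        obtain (rfl | ⟨α, rfl⟩ | hl2) := Ordinal.zero_or_succ_or_isSuccLimit β
        · exact absurd (by simp) h1
        · refine absurd ⟨α, ?_⟩ h2
          rw [← Ordinal.add_one_eq_succ, ← Ordinal.add_one_eq_succ, add_assoc]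
          norm_num
        · exact hl2
      have hβo : β < Order.succ β := Order.lt_succ β
      have hne : Nonempty (Set.Iio β) := ⟨⟨0, hβlim.pos⟩⟩
      have hioo : ∀ α : Set.Iio β, Nonempty (Set.Ioo (α : Ordinal) β) := by
        intro α
        refine ⟨⟨(α : Ordinal) + 1, ?_, ?_⟩⟩
        · exact lt_add_of_pos_right _ (by norm_num)
        · rw [Ordinal.add_one_eq_succ]; exact hβlim.succ_lt α.2
      refine ciSup_le fun α => ?_
      haveI := hioo α
      have hstep : (⨅ γ : Set.Ioo (α : Ordinal) β, f γ) ≤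
          (⨅ γ : Set.Ioo (α : Ordinal) β, f' γ) + D := by
        have hbdd : BddBelow (Set.range fun γ : Set.Ioo (α : Ordinal) β => f γ) := by
          refine ⟨-1, ?_⟩; rintro y ⟨δ, rfl⟩; exact (hf δ).1
        rw [← sub_le_iff_le_add]
        refine le_ciInf fun γ => ?_
        have hA : (⨅ γ : Set.Ioo (α : Ordinal) β, f γ) ≤ f γ := ciInf_le hbdd γ
        have hB := h γ (lt_trans γ.2.2 hβo)
        linarith
      refine hstep.trans (add_le_add_left ?_ D)
      refine le_ciSup (f := fun α : Set.Iio β => ⨅ γ : Set.Ioo (α : Ordinal) β, f' γ)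
        ⟨1, ?_⟩ α
      rintro y ⟨δ, rfl⟩
      obtain ⟨γ⟩ := hioo δ
      exact le_trans
        (ciInf_le ⟨-1, by rintro y ⟨ε, rfl⟩; exact (hf' ε).1⟩ γ) (hf' γ).2
    · exact absurd hl hlim

/-- The transfinite shift `T` is nonexpansive for the supremum metric on bounded functions
`Γ → [-1,1]` (`Γ` an ordinal): `sup_{α<Γ} |Tf(α) - Tf'(α)| ≤ sup_{α<Γ} |f(α) - f'(α)|`. -/
theorem stmt11 (Γ : Ordinal) (f f' : Ordinal → ℝ)
    (hf : ∀ α, f α ∈ Set.Icc (-1:ℝ) 1) (hf' : ∀ α, f' α ∈ Set.Icc (-1:ℝ) 1) :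
    (⨆ α : Set.Iio Γ, |Tshift f α - Tshift f' α|) ≤ ⨆ α : Set.Iio Γ, |f α - f' α| := by
  rcases eq_or_ne Γ 0 with rfl | hΓ
  · haveI : IsEmpty (Set.Iio (0:Ordinal)) := ⟨fun x => absurd x.2 (by simp)⟩
    rw [Real.iSup_of_isEmpty, Real.iSup_of_isEmpty]
  · have hpos : (0:Ordinal) < Γ := pos_iff_ne_zero.mpr hΓ
    haveI : Nonempty (Set.Iio Γ) := ⟨⟨0, hpos⟩⟩
    set D := ⨆ α : Set.Iio Γ, |f α - f' α| with hDdef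
    have hbdd : BddAbove (Set.range fun α : Set.Iio Γ => |f (α:Ordinal) - f' (α:Ordinal)|) := by
      refine ⟨2, ?_⟩
      rintro y ⟨α, rfl⟩
      obtain ⟨ha1, ha2⟩ := hf (α:Ordinal)
      obtain ⟨hb1, hb2⟩ := hf' (α:Ordinal)
      rw [abs_sub_le_iff]
      constructor <;> linarith
    have hle : ∀ γ, γ < Γ → |f γ - f' γ| ≤ D := fun γ hγ => le_ciSup hbdd ⟨γ, hγ⟩
    have hD0 : 0 ≤ D := le_trans (abs_nonneg _) (hle 0 hpos)
    refine ciSup_le fun o => ?_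
    have k1 : Tshift f o ≤ Tshift f' o + D := by
      refine Tshift_key f f' hf hf' D hD0 o fun γ hγ => ?_
      have hg := hle γ (lt_trans hγ o.2)
      rw [abs_sub_le_iff] at hg
      linarith [hg.1]
    have k2 : Tshift f' o ≤ Tshift f o + D := by
      refine Tshift_key f' f hf' hf D hD0 o fun γ hγ => ?_
      have hg := hle γ (lt_trans hγ o.2)
      rw [abs_sub_le_iff] at hg
      linarith [hg.2]
    rw [abs_sub_le_iff]
    exact ⟨by linarith, by linarith⟩
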